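/- For 0 < a < 1 and all real x with x ≠ 0 and 2x^2 ≠ a+1, C_a'(x) ≥ 0; i.e., C_a restricted to the real line is (weakly) increasing on each interval of its domain. -/

import Mathlib

noncomputable def CaR (a : ℝ) (x : ℝ) : ℝ :=
  (42 * x ^ 10 + (-51 * (a + 1)) * x ^ 8 + (4 * (5 * a ^ 2 + 3 * a + 5)) * x ^ 6
      + (-3 * (a ^ 3 - 7 * a ^ 2 - 7 * a + 1)) * x ^ 4
      + (-6 * a * (a ^ 2 + 3 * a + 1)) * x ^ 2 + a ^ 2 * (a + 1))
    / (8 * x ^ 3 * (2 * x ^ 2 - (a + 1)) ^ 3)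

lemma numDeriv (a x : ℝ) :
    HasDerivAt (fun x : ℝ => 42 * x ^ 10 + (-51 * (a + 1)) * x ^ 8
      + (4 * (5 * a ^ 2 + 3 * a + 5)) * x ^ 6
      + (-3 * (a ^ 3 - 7 * a ^ 2 - 7 * a + 1)) * x ^ 4
      + (-6 * a * (a ^ 2 + 3 * a + 1)) * x ^ 2 + a ^ 2 * (a + 1))
      (42 * (10 * x ^ 9) + (-51 * (a + 1)) * (8 * x ^ 7)
      + (4 * (5 * a ^ 2 + 3 * a + 5)) * (6 * x ^ 5)
      + (-3 * (a ^ 3 - 7 * a ^ 2 - 7 * a + 1)) * (4 * x ^ 3)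
      + (-6 * a * (a ^ 2 + 3 * a + 1)) * (2 * x)) x := by
  have h := (((((((hasDerivAt_pow 10 x).const_mul (42 : ℝ)).add
    ((hasDerivAt_pow 8 x).const_mul (-51 * (a + 1)))).add
    ((hasDerivAt_pow 6 x).const_mul (4 * (5 * a ^ 2 + 3 * a + 5)))).add
    ((hasDerivAt_pow 4 x).const_mul (-3 * (a ^ 3 - 7 * a ^ 2 - 7 * a + 1)))).add
    ((hasDerivAt_pow 2 x).const_mul (-6 * a * (a ^ 2 + 3 * a + 1)))).add_const
    (a ^ 2 * (a + 1)))
  exact h.congr_deriv (by push_cast; ring)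

lemma denDeriv (a x : ℝ) :
    HasDerivAt (fun x : ℝ => 8 * x ^ 3 * (2 * x ^ 2 - (a + 1)) ^ 3)
      (8 * (3 * x ^ 2) * (2 * x ^ 2 - (a + 1)) ^ 3
        + 8 * x ^ 3 * (3 * (2 * x ^ 2 - (a + 1)) ^ 2 * (2 * (2 * x)))) x := by
  have hin : HasDerivAt (fun x : ℝ => 2 * x ^ 2 - (a + 1)) (2 * (2 * x)) x := by
    have := ((hasDerivAt_pow 2 x).const_mul (2 : ℝ)).sub_const (a + 1)
    exact this.congr_deriv (by push_cast; ring)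
  have h := (((hasDerivAt_pow 3 x).const_mul (8 : ℝ)).mul (hin.pow 3))
  exact h.congr_deriv (by simp only [Pi.pow_apply]; push_cast; ring)

/-- For `0 < a < 1`, the real restriction of `C_a` has nonnegative derivative at every
point of its domain. -/
theorem stmt12 (a : ℝ) (ha0 : 0 < a) (ha1 : a < 1)
    (x : ℝ) (hx : x ≠ 0) (hx2 : 2 * x ^ 2 ≠ a + 1) :
    0 ≤ deriv (CaR a) x := by
  have hsub : 2 * x ^ 2 - (a + 1) ≠ 0 := sub_ne_zero.mpr hx2
  have hQ : 8 * x ^ 3 * (2 * x ^ 2 - (a + 1)) ^ 3 ≠ 0 := by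
    positivity
  have hd := (numDeriv a x).div (denDeriv a x) hQ
  have hdd : HasDerivAt (CaR a) _ x := hd
  rw [hdd.deriv]
  set P' := 42 * (10 * x ^ 9) + (-51 * (a + 1)) * (8 * x ^ 7)
      + (4 * (5 * a ^ 2 + 3 * a + 5)) * (6 * x ^ 5)
      + (-3 * (a ^ 3 - 7 * a ^ 2 - 7 * a + 1)) * (4 * x ^ 3)
      + (-6 * a * (a ^ 2 + 3 * a + 1)) * (2 * x) with hP'
  set P := 42 * x ^ 10 + (-51 * (a + 1)) * x ^ 8 + (4 * (5 * a ^ 2 + 3 * a + 5)) * x ^ 6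
      + (-3 * (a ^ 3 - 7 * a ^ 2 - 7 * a + 1)) * x ^ 4
      + (-6 * a * (a ^ 2 + 3 * a + 1)) * x ^ 2 + a ^ 2 * (a + 1) with hP
  set Q := 8 * x ^ 3 * (2 * x ^ 2 - (a + 1)) ^ 3 with hQdef
  set Q' := 8 * (3 * x ^ 2) * (2 * x ^ 2 - (a + 1)) ^ 3
        + 8 * x ^ 3 * (3 * (2 * x ^ 2 - (a + 1)) ^ 2 * (2 * (2 * x))) with hQ'
  have hnum : P' * Q - P * Q' =
      8 * x ^ 2 * (2 * x ^ 2 - (a + 1)) ^ 2 *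
        (3 * (x ^ 2 - 1) ^ 2 * (x ^ 2 - a) ^ 2 *
          (28 * x ^ 4 - 8 * (a + 1) * x ^ 2 + (a + 1) ^ 2)) := by
    rw [hP', hP, hQdef, hQ']; ring
  have hR : 0 < 28 * x ^ 4 - 8 * (a + 1) * x ^ 2 + (a + 1) ^ 2 := by
    nlinarith [sq_nonneg (7 * x ^ 2 - (a + 1)), sq_nonneg (a + 1), sq_nonneg x]
  apply div_nonneg
  · rw [hnum]
    have h1 : (0:ℝ) ≤ 8 * x ^ 2 * (2 * x ^ 2 - (a + 1)) ^ 2 := by positivity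
    have h2 : (0:ℝ) ≤ 3 * (x ^ 2 - 1) ^ 2 * (x ^ 2 - a) ^ 2 *
        (28 * x ^ 4 - 8 * (a + 1) * x ^ 2 + (a + 1) ^ 2) := by positivity
    exact mul_nonneg h1 h2
  · positivity
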